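/- With counting functions z_A(n) = #{j ≤ n : t(j)=1}, z_B(n) = #{j ≤ n : t(j)=0}, z_C(n) = #{j ≤ n : t(j)=2} for the infinite tribonacci word t, one has z_A(n) = 2B(n+1) − A(n+1) + 1, z_B(n) = A(n+1) − B(n+1) − (n+2), and z_C(n) = 2(n+1) − B(n+1) for all n ≥ −1. -/

import Mathlib

/-- The tribonacci substitution on letters: 0 ↦ 01, 1 ↦ 02, 2 ↦ 0. -/
def sigmaW : ℕ → List ℕ
  | 0 => [0, 1]
  | 1 => [0, 2]
  | _ => [0]

/-- The substitution extended to words (concatenation homomorphism). -/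
def sigmaL (w : List ℕ) : List ℕ := w.flatMap sigmaW

/-- The infinite tribonacci word t = 0,1,0,2,0,1,0,0,1,0,2,...,
the fixed point of the substitution starting from 0. -/
def t (n : ℕ) : ℕ := (sigmaL^[n + 1] [0]).getD n 0

/-- A(n): position of the (n+1)-st occurrence of the letter 1 in t. -/
noncomputable def A (n : ℕ) : ℕ := Nat.nth (fun k => t k = 1) n

/-- B(n): position of the (n+1)-st occurrence of the letter 0 in t. -/
noncomputable def B (n : ℕ) : ℕ := Nat.nth (fun k => t k = 0) n

/-- C(n): position of the (n+1)-st occurrence of the letter 2 in t. -/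
noncomputable def C (n : ℕ) : ℕ := Nat.nth (fun k => t k = 2) n

/-!
Write `zₗ(m)` for the number of letters `ℓ` in `t 0 ⋯ t (m - 1)`. Since `t = σ(t)`, the word
`σ(t 0 ⋯ t (m - 1))` is a prefix of `t`; call its length `blockStart m`. It contains one `0` per
letter, so `m` zeros, and one `1` per `0` of `t 0 ⋯ t (m - 1)`, and its length is
`m + z₀(m) + z₁(m)`. It is followed in `t` by the block `σ(t m)`, which begins with `0`, so
`B m = blockStart m`. As `t (blockStart m) = 0`, the block at `blockStart (blockStart m)` is `01`,
whence `A m = blockStart (blockStart m) + 1`. The three formulas follow from these by linear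
arithmetic, together with `z₀ + z₁ + z₂ = m`.
-/

@[simp]
theorem sigmaL_nil : sigmaL [] = [] := rfl

@[simp]
theorem sigmaL_cons (a : ℕ) (w : List ℕ) : sigmaL (a :: w) = sigmaW a ++ sigmaL w :=
  List.flatMap_cons

@[simp]
theorem sigmaL_append (u v : List ℕ) : sigmaL (u ++ v) = sigmaL u ++ sigmaL v :=
  List.flatMap_append

theorem count_zero_sigmaL (w : List ℕ) : (sigmaL w).count 0 = w.length := by
  induction w with
  | nil => rfl
  | cons a w ih => rcases a with _ | _ | a <;> simp [sigmaW, ih]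

theorem count_one_sigmaL (w : List ℕ) : (sigmaL w).count 1 = w.count 0 := by
  induction w with
  | nil => rfl
  | cons a w ih => rcases a with _ | _ | a <;> simp [sigmaW, ih]

theorem length_sigmaL (w : List ℕ) : (sigmaL w).length = w.length + w.count 0 + w.count 1 := by
  induction w with
  | nil => rfl
  | cons a w ih => rcases a with _ | _ | a <;> simp [sigmaW, ih] <;> omega

theorem lt_three_of_mem_sigmaL {w : List ℕ} {x : ℕ} (h : x ∈ sigmaL w) : x < 3 := by
  obtain ⟨a, -, hx⟩ := List.mem_flatMap.mp h
  rcases a with _ | _ | a <;> simp [sigmaW] at hx <;> omega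

def tribWord (n : ℕ) : List ℕ := sigmaL^[n] [0]

theorem tribWord_succ (n : ℕ) : tribWord (n + 1) = sigmaL (tribWord n) :=
  Function.iterate_succ_apply' _ _ _

theorem tribWord_prefix_succ (n : ℕ) : tribWord n <+: tribWord (n + 1) := by
  induction n with
  | zero => exact ⟨[1], rfl⟩
  | succ n ih =>
    rw [tribWord_succ n, tribWord_succ (n + 1)]
    exact ih.flatMap sigmaW

theorem tribWord_prefix {a b : ℕ} (h : a ≤ b) : tribWord a <+: tribWord b := by
  induction h with
  | refl => exact List.prefix_refl _
  | step _ ih => exact ih.trans (tribWord_prefix_succ _)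

theorem lt_length_tribWord (n : ℕ) : n < (tribWord n).length := by
  induction n with
  | zero => simp [tribWord]
  | succ n ih =>
    have hzero : 0 < (tribWord n).count 0 :=
      List.count_pos_iff.mpr ((tribWord_prefix n.zero_le).mem (by simp [tribWord]))
    rw [tribWord_succ, length_sigmaL]
    omega

theorem getElem_tribWord {n i : ℕ} (h : i < (tribWord n).length) : (tribWord n)[i] = t i := by
  have hi : i < (tribWord (i + 1)).length := (lt_length_tribWord (i + 1)).trans' i.lt_succ_self
  rw [show t i = (tribWord (i + 1)).getD i 0 from rfl, List.getD_eq_getElem _ _ hi]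
  rcases le_total n (i + 1) with hle | hle
  · exact (tribWord_prefix hle).getElem h
  · exact ((tribWord_prefix hle).getElem hi).symm

theorem t_lt_three (n : ℕ) : t n < 3 := by
  have hn := lt_length_tribWord (n + 1)
  rw [← getElem_tribWord (by omega : n < (tribWord (n + 1)).length)]
  apply lt_three_of_mem_sigmaL (w := tribWord n)
  rw [← tribWord_succ]
  exact List.getElem_mem _

def tPrefix (m : ℕ) : List ℕ := (List.range m).map t

@[simp]
theorem length_tPrefix (m : ℕ) : (tPrefix m).length = m := by simp [tPrefix]

theorem tPrefix_add (a b : ℕ) :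
    tPrefix (a + b) = tPrefix a ++ (List.range b).map (fun i => t (a + i)) := by
  simp [tPrefix, List.range_add]

theorem count_tPrefix (ℓ m : ℕ) : (tPrefix m).count ℓ = Nat.count (fun j => t j = ℓ) m := by
  simp only [tPrefix, List.count, List.countP_map, Nat.count, Function.comp_def]
  exact List.countP_congr (by simp)

theorem eq_tPrefix_of_prefix_tribWord {u : List ℕ} {n : ℕ} (h : u <+: tribWord n) :
    u = tPrefix u.length := by
  refine List.ext_getElem (by simp) fun i hu _ => ?_
  rw [h.getElem hu, getElem_tribWord]
  simp [tPrefix]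

theorem tPrefix_prefix_tribWord (m : ℕ) : tPrefix m <+: tribWord m := by
  have htake := List.take_prefix m (tribWord m)
  rwa [eq_tPrefix_of_prefix_tribWord htake, List.length_take,
    min_eq_left (lt_length_tribWord m).le] at htake

def blockStart (m : ℕ) : ℕ := (sigmaL (tPrefix m)).length

theorem sigmaL_tPrefix (m : ℕ) : sigmaL (tPrefix m) = tPrefix (blockStart m) := by
  apply eq_tPrefix_of_prefix_tribWord (n := m + 1)
  rw [tribWord_succ]
  exact (tPrefix_prefix_tribWord m).flatMap sigmaW

theorem tPrefix_succ (m : ℕ) : tPrefix (m + 1) = tPrefix m ++ [t m] := by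
  simp [tPrefix_add]

theorem blockStart_succ (m : ℕ) : blockStart (m + 1) = blockStart m + (sigmaW (t m)).length := by
  simp [blockStart, tPrefix_succ]

theorem map_t_blockStart_add (m : ℕ) :
    (List.range (sigmaW (t m)).length).map (fun i => t (blockStart m + i)) = sigmaW (t m) := by
  have h := sigmaL_tPrefix (m + 1)
  rw [tPrefix_succ, sigmaL_append, sigmaL_tPrefix, blockStart_succ, tPrefix_add] at h
  simpa using (List.append_cancel_left h).symm

theorem t_blockStart (m : ℕ) : t (blockStart m) = 0 := by
  have h := map_t_blockStart_add m
  generalize t m = x at h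
  rcases x with _ | _ | x <;> simp_all [sigmaW, List.range_succ]

theorem t_blockStart_add_one {m : ℕ} (h : t m = 0) : t (blockStart m + 1) = 1 := by
  have hblock := map_t_blockStart_add m
  simp_all [sigmaW, List.range_succ]

theorem count_zero_blockStart (m : ℕ) : Nat.count (fun j => t j = 0) (blockStart m) = m := by
  rw [← count_tPrefix, ← sigmaL_tPrefix, count_zero_sigmaL, length_tPrefix]

theorem count_one_blockStart (m : ℕ) :
    Nat.count (fun j => t j = 1) (blockStart m) = Nat.count (fun j => t j = 0) m := by
  rw [← count_tPrefix, ← sigmaL_tPrefix, count_one_sigmaL, count_tPrefix]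

theorem blockStart_eq (m : ℕ) :
    blockStart m = m + Nat.count (fun j => t j = 0) m + Nat.count (fun j => t j = 1) m := by
  rw [blockStart, length_sigmaL, length_tPrefix, count_tPrefix, count_tPrefix]

theorem count_zero_add_count_one_add_count_two (m : ℕ) :
    Nat.count (fun j => t j = 0) m + Nat.count (fun j => t j = 1) m +
      Nat.count (fun j => t j = 2) m = m := by
  induction m with
  | zero => simp
  | succ m ih =>
    have := t_lt_three m
    simp only [Nat.count_succ]
    split_ifs <;> omega

theorem B_eq_blockStart (m : ℕ) : B m = blockStart m := by
  have h := Nat.nth_count (p := fun j => t j = 0) (t_blockStart m)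
  rwa [count_zero_blockStart] at h

theorem A_eq_blockStart_blockStart_add_one (m : ℕ) : A m = blockStart (blockStart m) + 1 := by
  have h := Nat.nth_count (p := fun j => t j = 1) (t_blockStart_add_one (t_blockStart m))
  rwa [Nat.count_succ, count_one_blockStart, count_zero_blockStart, t_blockStart,
    if_neg zero_ne_one, add_zero] at h

/-- The index `m` stands for `n + 1`, so that `n = -1` is `m = 0`: the count over `j ≤ n` is the
count over `j < m`. -/
theorem counting_formulas (m : ℕ) :
    ((((Finset.range m).filter (fun j => t j = 1)).card : ℤ) = 2 * B m - A m + 1) ∧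
    ((((Finset.range m).filter (fun j => t j = 0)).card : ℤ) = A m - B m - (m + 1)) ∧
    ((((Finset.range m).filter (fun j => t j = 2)).card : ℤ) = 2 * m - B m) := by
  simp only [← Nat.count_eq_card_filter_range, A_eq_blockStart_blockStart_add_one, B_eq_blockStart]
  have hstart := blockStart_eq m
  have hstart_start := blockStart_eq (blockStart m)
  rw [count_zero_blockStart, count_one_blockStart] at hstart_start
  have htotal := count_zero_add_count_one_add_count_two m
  refine ⟨?_, ?_, ?_⟩ <;> push_cast <;> omega
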